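/- Let G be a connected even graph and let 𝒞 be a cycle decomposition of G whose cycle intersection graph CI(G) is a path with n edges. Then ∇(G) = ⌈(n+1)/2⌉. -/

import Mathlib

open SimpleGraph

variable {V : Type*}

/-- A graph is *even* if every vertex has even degree. -/
def IsEvenGraph (G : SimpleGraph V) : Prop :=
  ∀ v : V, Even (G.neighborSet v).ncard

/-- A subgraph is a *cycle* if it is connected and every one of its vertices has degree 2. -/
def IsCycleSubgraph {G : SimpleGraph V} (H : G.Subgraph) : Prop :=
  H.Connected ∧ ∀ v ∈ H.verts, (H.neighborSet v).ncard = 2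

/-- A *cycle decomposition* of `G` is a family of cycle subgraphs such that every edge of `G`
lies in exactly one of them. -/
def IsCycleDecomposition (G : SimpleGraph V) (𝒞 : Set G.Subgraph) : Prop :=
  (∀ C ∈ 𝒞, IsCycleSubgraph C) ∧ ∀ e ∈ G.edgeSet, ∃! C, C ∈ 𝒞 ∧ e ∈ SimpleGraph.Subgraph.edgeSet C

/-- The edges of the cycle intersection *multigraph* of a cycle decomposition `𝒞`:
one edge joining `C` and `C'` for each pair of distinct cycles `C ≠ C'` of `𝒞` and each
vertex `v` lying on both (the edge is labelled by `v`). -/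
def CIEdges (G : SimpleGraph V) (𝒞 : Set G.Subgraph) : Set (Sym2 G.Subgraph × V) :=
  {p | ∃ C ∈ 𝒞, ∃ C' ∈ 𝒞, ∃ v : V, C ≠ C' ∧
    v ∈ C.verts ∩ SimpleGraph.Subgraph.verts C' ∧ p = (s(C, C'), v)}

/-- The underlying simple graph of the cycle intersection graph of a cycle decomposition:
two distinct cycles are adjacent iff they share a vertex. -/
def CIGraph (G : SimpleGraph V) (𝒞 : Set G.Subgraph) : SimpleGraph 𝒞 where
  Adj C D := C ≠ D ∧ ((C : G.Subgraph).verts ∩ (D : G.Subgraph).verts).Nonempty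
  symm := by
    constructor
    rintro C D ⟨h1, h2⟩
    exact ⟨h1.symm, by rwa [Set.inter_comm] at h2⟩
  loopless := by constructor; rintro C ⟨h1, _⟩; exact h1 rfl

/-- The cycle intersection graph is *simple* iff any two distinct cycles of the decomposition
intersect in at most one vertex. -/
def CISimple (G : SimpleGraph V) (𝒞 : Set G.Subgraph) : Prop :=
  ∀ C ∈ 𝒞, ∀ D ∈ 𝒞, C ≠ D →
    ((C : G.Subgraph).verts ∩ (D : G.Subgraph).verts).ncard ≤ 1

/-- `S` is a decycling set of `G` iff `G - S` is acyclic. -/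
def IsDecyclingSet (G : SimpleGraph V) (S : Set V) : Prop :=
  (G.induce Sᶜ).IsAcyclic

/-- The decycling number of `G`: the minimum size of a decycling set. -/
noncomputable def decyclingNumber (G : SimpleGraph V) : ℕ :=
  sInf {n | ∃ S : Set V, IsDecyclingSet G S ∧ S.ncard = n}

/-- The *size* of a spanning forest: its number of edges plus its number of isolated vertices. -/
noncomputable def forestSize {W : Type*} (F : SimpleGraph W) : ℕ :=
  F.edgeSet.ncard + {v : W | ∀ w, ¬ F.Adj v w}.ncard

/-- The minimum size of a spanning forest of `H` (a spanning forest is an acyclic spanning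
subgraph; note a subgraph `F ≤ H` on the same vertex type is automatically spanning). -/
noncomputable def MSF {W : Type*} (H : SimpleGraph W) : ℕ :=
  sInf {n | ∃ F ≤ H, F.IsAcyclic ∧ forestSize F = n}

/-!
Index the cycles of the decomposition along the path as `D 0, …, D n`. A decycling set must meet
every `D i`, and a vertex lies on at most two of them (three would be pairwise adjacent in the
path), so it has at least `⌈(n + 1) / 2⌉` vertices.

Conversely, every cycle of `G` has all its edges in a single `D i`: for `i` maximal among the
cycles it uses, its edges inside and outside `D i` can only meet at the unique vertex of
`D (i - 1) ∩ D i`, and a cycle cannot be disconnected by removing one vertex. Being 2-regular and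
connected, `D i` is then the whole cycle, so any set meeting every `D i` is decycling. One vertex
of `D k ∩ D (k + 1)` for each even `k < n`, plus a vertex of `D n` when `n` is even, gives such a
set of size `⌈(n + 1) / 2⌉`.
-/

namespace SimpleGraph.Walk

variable {G : SimpleGraph V}

lemma iff_of_mem_edges_of_fst_ne {E : Set (Sym2 V)} {P : Sym2 V → Prop} {x : V}
    (hP : ∀ a v b, s(a, v) ∈ E → s(v, b) ∈ E → v ≠ x → (P s(a, v) ↔ P s(v, b)))
    {a b : V} (p : G.Walk a b) {z : V} (hx : ∀ d ∈ p.darts, d.fst ≠ x) (hza : s(z, a) ∈ E)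
    (hE : ∀ e ∈ p.edges, e ∈ E) : ∀ e ∈ p.edges, P e ↔ P s(z, a) := by
  induction p generalizing z with
  | nil => simp
  | @cons a a' b h q ih =>
    simp only [darts_cons, List.mem_cons, forall_eq_or_imp, edges_cons] at hx hE ⊢
    have hstep := hP z a a' hza hE.1 hx.1
    exact ⟨hstep.symm, fun e he => (ih hx.2 hE.1 hE.2 e he).trans hstep.symm⟩

lemma forall_mem_edges_of_notMem_dropLast {u x : V} {c : G.Walk u u}
    (hx : x ∉ c.support.tail.dropLast) {P : Sym2 V → Prop}
    (hP : ∀ a v b, s(a, v) ∈ c.edges → s(v, b) ∈ c.edges → v ≠ x → (P s(a, v) ↔ P s(v, b)))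
    {e₀ : Sym2 V} (he₀ : e₀ ∈ c.edges) (hPe₀ : P e₀) : ∀ e ∈ c.edges, P e := by
  cases c with
  | nil => simp at he₀
  | @cons _ w _ h q =>
    have hq : ∀ d ∈ q.darts, d.fst ≠ x := by
      intro d hd hdx
      apply hx
      rw [support_cons, List.tail_cons, ← map_fst_darts, ← hdx]
      exact List.mem_map_of_mem hd
    have key := iff_of_mem_edges_of_fst_ne (E := {e | e ∈ (cons h q).edges}) (z := u) hP q hq
      (by simp) (fun e he => by simp [he])
    simp only [edges_cons, List.mem_cons, forall_eq_or_imp] at he₀ ⊢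
    have hfirst : P s(u, w) := by
      rcases he₀ with rfl | he₀
      · exact hPe₀
      · exact (key e₀ he₀).mp hPe₀
    exact ⟨hfirst, fun e he => (key e he).mpr hfirst⟩

lemma IsCycle.notMem_dropLast_tail_support {x : V} {c : G.Walk x x} (hc : c.IsCycle) :
    x ∉ c.support.tail.dropLast := by
  cases c with
  | nil => simp
  | cons h q =>
    have hnd : q.support.Nodup := by simpa using hc.support_nodup
    rw [support_cons, List.tail_cons]
    intro hx
    have hq := List.dropLast_append_getLast (l := q.support) (by simp)
    rw [getLast_support] at hq
    rw [← hq, List.nodup_append] at hnd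
    exact hnd.2.2 x hx x (by simp) rfl

/-- A cycle minus one vertex is still a path: rotate the cycle to start at `x` and propagate `P`
along it. -/
lemma IsCycle.forall_mem_edges {u x : V} {c : G.Walk u u} (hc : c.IsCycle) {P : Sym2 V → Prop}
    (hP : ∀ a v b, s(a, v) ∈ c.edges → s(v, b) ∈ c.edges → P s(a, v) → ¬ P s(v, b) → v = x)
    {e₀ : Sym2 V} (he₀ : e₀ ∈ c.edges) (hPe₀ : P e₀) : ∀ e ∈ c.edges, P e := by
  have hP' : ∀ a v b, s(a, v) ∈ c.edges → s(v, b) ∈ c.edges → v ≠ x →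
      (P s(a, v) ↔ P s(v, b)) := by
    intro a v b ha hb hv
    refine ⟨fun h => by_contra fun h' => hv (hP a v b ha hb h h'), fun h => by_contra fun h' => ?_⟩
    rw [Sym2.eq_swap] at ha hb h h'
    exact hv (hP b v a hb ha h h')
  classical
  by_cases hxc : x ∈ c.support
  · have hrot := rotate_edges c x hxc
    simp only [← hrot.mem_iff] at hP' he₀ ⊢
    exact forall_mem_edges_of_notMem_dropLast (hc.rotate hxc).notMem_dropLast_tail_support hP' he₀
      hPe₀
  · exact forall_mem_edges_of_notMem_dropLast
      (fun h => hxc (List.mem_of_mem_tail (List.mem_of_mem_dropLast h))) hP' he₀ hPe₀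

end SimpleGraph.Walk

namespace SimpleGraph

variable {G : SimpleGraph V}

/-- Take `i` maximal among the indices of the `D j` used by `c`: the edges of `c` in `D i` and
those in lower `D j` can only meet at the one vertex `D i` shares with lower cycles. -/
lemma Walk.IsCycle.exists_forall_mem_edgeSet {ι : Type*} [LinearOrder ι] [Finite ι]
    {D : ι → G.Subgraph} (hcover : ∀ e ∈ G.edgeSet, ∃ i, e ∈ (D i).edgeSet)
    (hlow : ∀ i, {v | v ∈ (D i).verts ∧ ∃ j < i, v ∈ (D j).verts}.Subsingleton)
    {u : V} {c : G.Walk u u} (hc : c.IsCycle) : ∃ i, ∀ e ∈ c.edges, e ∈ (D i).edgeSet := by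
  set I := {i | ∃ e ∈ c.edges, e ∈ (D i).edgeSet}
  have hI : I.Nonempty := by
    obtain ⟨e, he⟩ := List.exists_mem_of_ne_nil c.edges (by simpa using hc.not_nil)
    obtain ⟨i, hi⟩ := hcover e (c.edges_subset_edgeSet he)
    exact ⟨i, e, he, hi⟩
  obtain ⟨M, ⟨e₀, he₀, he₀M⟩, hMmax⟩ := Set.exists_max_image I id (Set.toFinite I) hI
  obtain ⟨x, hx⟩ : ∃ x, ∀ v ∈ {v | v ∈ (D M).verts ∧ ∃ j < M, v ∈ (D j).verts}, v = x := by
    rcases (hlow M).eq_empty_or_singleton with h | ⟨x, h⟩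
    · exact ⟨u, by simp [h]⟩
    · exact ⟨x, by simp [h]⟩
  refine ⟨M, hc.forall_mem_edges (x := x) (fun a v b ha hb hav hvb => hx v ⟨?_, ?_⟩) he₀ he₀M⟩
  · exact (D M).mem_verts_of_mem_edge hav (Sym2.mem_mk_right a v)
  · obtain ⟨j, hj⟩ := hcover _ (c.edges_subset_edgeSet hb)
    refine ⟨j, lt_of_le_of_ne (hMmax j ⟨_, hb, hj⟩) ?_,
      (D j).mem_verts_of_mem_edge hj (Sym2.mem_mk_left v b)⟩
    rintro rfl
    exact hvb hj

lemma Walk.IsCycle.verts_subset_support {C : G.Subgraph} (hC : IsCycleSubgraph C) {u : V}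
    {c : G.Walk u u} (hc : c.IsCycle) (hcC : ∀ e ∈ c.edges, e ∈ C.edgeSet) :
    C.verts ⊆ {v | v ∈ c.support} := by
  have hle : c.toSubgraph ≤ C := (Walk.toSubgraph_le_iff hc.not_nil).mpr hcC
  have hclosed : ∀ v ∈ c.support, ∀ w, C.Adj v w → w ∈ c.support := by
    intro v hv w hvw
    have hdeg := hC.2 v (hle.1 (by simpa using hv))
    have hfin : (C.neighborSet v).Finite := Set.finite_of_ncard_ne_zero (by rw [hdeg]; norm_num)
    have heq := Set.eq_of_subset_of_ncard_le (Subgraph.neighborSet_subset_of_subgraph hle v)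
      (by rw [hdeg, hc.ncard_neighborSet_toSubgraph_eq_two hv]) hfin
    rw [← Subgraph.mem_neighborSet, ← heq] at hvw
    exact Walk.mem_support_of_adj_toSubgraph hvw.symm
  have hreach : ∀ (a b : C.verts) (p : C.coe.Walk a b), a.1 ∈ c.support → b.1 ∈ c.support := by
    intro a b p
    induction p with
    | nil => exact id
    | cons h _ ih => exact fun ha => ih (hclosed _ ha _ h)
  intro w hw
  obtain ⟨p⟩ := hC.1.preconnected ⟨u, hle.1 (by simp)⟩ ⟨w, hw⟩
  exact hreach _ _ p c.start_mem_support

lemma IsCycleSubgraph.not_isAcyclic_coe [Finite V] {C : G.Subgraph} (hC : IsCycleSubgraph C) :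
    ¬ C.coe.IsAcyclic := by
  classical
  intro hac
  obtain ⟨v, hv⟩ := hC.1.nonempty
  have : Nontrivial C.verts := by
    obtain ⟨w, hw⟩ := Set.nonempty_of_ncard_ne_zero (s := C.neighborSet v) (by simp [hC.2 v hv])
    exact ⟨⟨v, hv⟩, ⟨w, C.edge_vert hw.symm⟩, fun h => hw.ne (congrArg Subtype.val h)⟩
  have : Fintype C.verts := Fintype.ofFinite _
  obtain ⟨w, hw⟩ := (IsTree.mk hC.1.coe hac).exists_vert_degree_one_of_nontrivial
  have h2 := hC.2 w w.2
  rw [Subgraph.coe_degree, ← Subgraph.finset_card_neighborSet_eq_degree,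
    ← Set.ncard_eq_toFinset_card'] at hw
  omega

lemma IsDecyclingSet.inter_verts_nonempty [Finite V] {S : Set V} (hS : IsDecyclingSet G S)
    {C : G.Subgraph} (hC : IsCycleSubgraph C) : (C.verts ∩ S).Nonempty := by
  by_contra hCS
  have hsub : C.verts ⊆ Sᶜ := fun x hx hxS => hCS ⟨x, hx, hxS⟩
  let f : C.coe →g G.induce Sᶜ :=
    { toFun := fun x => ⟨x.1, hsub x.2⟩
      map_rel' := fun h => h.adj_sub }
  exact hC.not_isAcyclic_coe (hS.comap f fun x y hxy => Subtype.ext (Subtype.mk.inj hxy))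

lemma isDecyclingSet_of_forall_inter_nonempty {ι : Type*} [LinearOrder ι] [Finite ι]
    {D : ι → G.Subgraph} (hD : ∀ i, IsCycleSubgraph (D i))
    (hcover : ∀ e ∈ G.edgeSet, ∃ i, e ∈ (D i).edgeSet)
    (hlow : ∀ i, {v | v ∈ (D i).verts ∧ ∃ j < i, v ∈ (D j).verts}.Subsingleton)
    {S : Set V} (hS : ∀ i, ((D i).verts ∩ S).Nonempty) : IsDecyclingSet G S := by
  intro v c hc
  let F := Embedding.induce (G := G) Sᶜ
  have hW := (Walk.isCycle_map_iff_of_injective (f := F.toHom) F.injective).mpr hc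
  obtain ⟨i, hi⟩ := hW.exists_forall_mem_edgeSet hcover hlow
  obtain ⟨s, hsD, hsS⟩ := hS i
  have hs := hW.verts_subset_support (hD i) hi hsD
  rw [Set.mem_ofPred_eq, Walk.support_map, List.mem_map] at hs
  obtain ⟨y, -, rfl⟩ := hs
  exact y.2 hsS

end SimpleGraph

lemma card_le_mul_ncard_of_forall_inter_nonempty {ι α : Type*} [Fintype ι] (A : ι → Set α)
    {S : Set α} (hSfin : S.Finite) (hS : ∀ i, (A i ∩ S).Nonempty) {k : ℕ}
    (hk : ∀ a, {i | a ∈ A i}.ncard ≤ k) : Fintype.card ι ≤ k * S.ncard := by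
  classical
  choose g hgA hgS using hS
  have hfib : ∀ a ∈ Finset.univ.image g, (Finset.univ.filter fun i => g i = a).card ≤ k := by
    intro a _
    refine le_trans ?_ (hk a)
    rw [Set.ncard_eq_toFinset_card']
    exact Finset.card_le_card fun i hi => by
      simp only [Finset.mem_filter] at hi
      simpa [← hi.2] using hgA i
  calc Fintype.card ι ≤ k * (Finset.univ.image g).card := Finset.card_le_mul_card_image _ k hfib
    _ ≤ k * S.ncard := by
      gcongr
      rw [Set.ncard_eq_toFinset_card _ hSfin]
      exact Finset.card_le_card fun a ha => by
        obtain ⟨i, -, rfl⟩ := Finset.mem_image.mp ha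
        simpa using hgS i

section PathFamily

variable {n : ℕ} {A : Fin (n + 1) → Set V}

lemma ncard_setOf_mem_le_two
    (hA : ∀ i j, i ≠ j → (A i ∩ A j).Nonempty → (pathGraph (n + 1)).Adj i j) (v : V) :
    {i | v ∈ A i}.ncard ≤ 2 := by
  by_contra! h
  obtain ⟨a, b, c, ha, hb, hc, hab, hac, hbc⟩ := (Set.two_lt_ncard_iff (Set.toFinite _)).mp h
  have h1 := pathGraph_adj.mp (hA a b hab ⟨v, ha, hb⟩)
  have h2 := pathGraph_adj.mp (hA a c hac ⟨v, ha, hc⟩)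
  have h3 := pathGraph_adj.mp (hA b c hbc ⟨v, hb, hc⟩)
  omega

lemma subsingleton_setOf_mem_and_exists_lt_mem
    (hA : ∀ i j, i ≠ j → (A i ∩ A j).Nonempty → (pathGraph (n + 1)).Adj i j)
    (hsimple : ∀ i j, i ≠ j → (A i ∩ A j).Subsingleton) (i : Fin (n + 1)) :
    {v | v ∈ A i ∧ ∃ j < i, v ∈ A j}.Subsingleton := by
  rintro v ⟨hvi, j, hji, hvj⟩ w ⟨hwi, j', hj'i, hwj'⟩
  have h1 := pathGraph_adj.mp (hA j i hji.ne ⟨v, hvj, hvi⟩)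
  have h2 := pathGraph_adj.mp (hA j' i hj'i.ne ⟨w, hwj', hwi⟩)
  have : j = j' := by
    rw [Fin.lt_def] at hji hj'i
    exact Fin.ext (by omega)
  subst this
  exact hsimple j i hji.ne ⟨hvj, hvi⟩ ⟨hwj', hwi⟩

lemma exists_ncard_le_forall_inter_nonempty
    (hA : ∀ i j, (pathGraph (n + 1)).Adj i j → (A i ∩ A j).Nonempty) (hne : ∀ i, (A i).Nonempty) :
    ∃ S : Set V, (∀ i, (A i ∩ S).Nonempty) ∧ S.ncard ≤ (n + 2) / 2 := by
  classical
  have hnext : ∀ i : Fin (n + 1), ∃ y ∈ A i, ∀ j : Fin (n + 1), (j : ℕ) = i + 1 → y ∈ A j := by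
    intro i
    by_cases hi : (i : ℕ) < n
    · obtain ⟨y, hyi, hyj⟩ := hA i ⟨i + 1, by omega⟩ (pathGraph_adj.mpr (Or.inl rfl))
      exact ⟨y, hyi, fun j hj => by rwa [show j = ⟨i + 1, by omega⟩ from Fin.ext hj]⟩
    · obtain ⟨y, hy⟩ := hne i
      exact ⟨y, hy, fun j hj => absurd j.2 (by omega)⟩
  choose y hyA hyA' using hnext
  let z : ℕ → V := fun k => y ⟨min (2 * k) n, by omega⟩
  refine ⟨(Finset.range ((n + 2) / 2)).image z, fun i => ?_, ?_⟩
  · have hk : (i : ℕ) / 2 < (n + 2) / 2 := by omega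
    refine ⟨z (i / 2), ?_,
      Finset.mem_coe.mpr (Finset.mem_image_of_mem z (Finset.mem_range.mpr hk))⟩
    rcases Nat.even_or_odd' (i : ℕ) with ⟨k, hik | hik⟩
    · convert hyA i using 2
      exact Fin.ext (by dsimp only; omega)
    · refine hyA' _ i ?_
      simp only
      omega
  · rw [Set.ncard_coe_finset]
    exact Finset.card_image_le.trans (Finset.card_range _).le

end PathFamily

lemma decyclingNumber_eq_of_le {G : SimpleGraph V} {k : ℕ} {S₀ : Set V}
    (hS₀ : IsDecyclingSet G S₀) (hk : S₀.ncard ≤ k)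
    (hmin : ∀ S, IsDecyclingSet G S → k ≤ S.ncard) : decyclingNumber G = k := by
  have hS₀mem : S₀.ncard ∈ {m | ∃ S, IsDecyclingSet G S ∧ S.ncard = m} := ⟨S₀, hS₀, rfl⟩
  refine le_antisymm ((Nat.sInf_le hS₀mem).trans hk) (le_csInf ⟨_, hS₀mem⟩ ?_)
  rintro m ⟨S, hS, rfl⟩
  exact hmin S hS

lemma natCeil_natCast_add_one_div_two (n : ℕ) : ⌈((n : ℚ) + 1) / 2⌉₊ = (n + 2) / 2 := by
  obtain ⟨m, rfl | rfl⟩ := Nat.even_or_odd' n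
  · rw [show (2 * m + 2) / 2 = m + 1 by omega, Nat.ceil_eq_iff (by omega)]
    push_cast
    constructor <;> linarith
  · rw [show (2 * m + 1 + 2) / 2 = m + 1 by omega, Nat.ceil_eq_iff (by omega)]
    push_cast
    constructor <;> linarith

theorem decyclingNumber_of_CI_isPath_general [Fintype V]
    (G : SimpleGraph V)
    (𝒞 : Set G.Subgraph) (hdec : IsCycleDecomposition G 𝒞)
    (hsimple : CISimple G 𝒞) (n : ℕ)
    (hpath : Nonempty (CIGraph G 𝒞 ≃g SimpleGraph.pathGraph (n + 1))) :
    decyclingNumber G = ⌈((n : ℚ) + 1) / 2⌉₊ := by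
  obtain ⟨e⟩ := hpath
  set D : Fin (n + 1) → G.Subgraph := fun i => e.symm i
  have hcyc : ∀ i, IsCycleSubgraph (D i) := fun i => hdec.1 _ (e.symm i).2
  have hcover : ∀ x ∈ G.edgeSet, ∃ i, x ∈ (D i).edgeSet := fun x hx => by
    obtain ⟨C, ⟨hC, hxC⟩, -⟩ := hdec.2 x hx
    exact ⟨e ⟨C, hC⟩, by simpa [D] using hxC⟩
  have hmeet : ∀ i j, (pathGraph (n + 1)).Adj i j ↔
      i ≠ j ∧ ((D i).verts ∩ (D j).verts).Nonempty := fun i j => by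
    rw [← e.symm.map_adj_iff]
    exact and_congr_left' e.symm.injective.ne_iff
  have hsingle : ∀ i j, i ≠ j → ((D i).verts ∩ (D j).verts).Subsingleton := fun i j hij =>
    Set.ncard_le_one_iff_subsingleton.mp <| hsimple _ (e.symm i).2 _ (e.symm j).2
      fun h => hij (e.symm.injective (Subtype.ext h))
  have hadj : ∀ i j, i ≠ j → ((D i).verts ∩ (D j).verts).Nonempty →
      (pathGraph (n + 1)).Adj i j := fun i j hij h => (hmeet i j).mpr ⟨hij, h⟩
  rw [natCeil_natCast_add_one_div_two]
  obtain ⟨S, hS, hScard⟩ := exists_ncard_le_forall_inter_nonempty (A := fun i => (D i).verts)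
    (fun i j h => ((hmeet i j).mp h).2) (fun i => (hcyc i).1.nonempty)
  refine decyclingNumber_eq_of_le (isDecyclingSet_of_forall_inter_nonempty hcyc hcover
    (subsingleton_setOf_mem_and_exists_lt_mem hadj hsingle) hS) hScard fun S' hS' => ?_
  have hcount := card_le_mul_ncard_of_forall_inter_nonempty (fun i => (D i).verts) S'.toFinite
    (fun i => hS'.inter_verts_nonempty (hcyc i)) (ncard_setOf_mem_le_two hadj)
  rw [Fintype.card_fin] at hcount
  omega

/-- If the cycle intersection graph of a cycle decomposition `𝒞` of a
connected even graph `G` is a path with `n` edges (hence `n + 1` vertices), then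
`∇(G) = ⌈(n + 1) / 2⌉`. -/
theorem decyclingNumber_of_CI_isPath [Fintype V]
    (G : SimpleGraph V) (hconn : G.Connected) (heven : IsEvenGraph G)
    (𝒞 : Set G.Subgraph) (hdec : IsCycleDecomposition G 𝒞)
    (hsimple : CISimple G 𝒞) (n : ℕ)
    (hpath : Nonempty (CIGraph G 𝒞 ≃g SimpleGraph.pathGraph (n + 1))) :
    decyclingNumber G = ⌈((n : ℚ) + 1) / 2⌉₊ :=
  decyclingNumber_of_CI_isPath_general G 𝒞 hdec hsimple n hpath
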